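/- arXiv:1603.04415 — 2 statements merged into one kernel-verified Lean document; each statement's English description precedes it below -/
import Mathlib

section
/- Let D be a strongly connected digraph with loop number p* and irreducible components with vertex sets U_0,…,U_{p*−1}. Then D is a rose (all cycles have the same length and share a common vertex) if and only if at least one U_k is a singleton. -/
/-- A walk of length `ℓ` from `a` to `b` in the digraph with edge relation `E`. -/
def IsWalk {V : Type*} (E : V → V → Prop) (w : ℕ → V) (ℓ : ℕ) (a b : V) : Prop :=
  w 0 = a ∧ w ℓ = b ∧ ∀ i < ℓ, E (w i) (w (i + 1))

/-- A digraph is strongly connected if any vertex can reach any other by a walk. -/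
def StronglyConnected {V : Type*} (E : V → V → Prop) : Prop :=
  ∀ a b : V, ∃ w ℓ, IsWalk E w ℓ a b

/-- A cycle of length `ℓ`: a closed walk with no repeated vertices other than start/end. -/
def IsCycle {V : Type*} (E : V → V → Prop) (w : ℕ → V) (ℓ : ℕ) : Prop :=
  0 < ℓ ∧ w ℓ = w 0 ∧ (∀ i < ℓ, E (w i) (w (i + 1))) ∧
    ∀ i j, i < ℓ → j < ℓ → w i = w j → i = j

/-- `RelP E p a b` (written `a ∼ₚ b`): some walk from `a` to `b` has length divisible by `p`. -/
def RelP {V : Type*} (E : V → V → Prop) (p : ℕ) (a b : V) : Prop :=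
  ∃ w ℓ, IsWalk E w ℓ a b ∧ p ∣ ℓ

/-- A digraph is a rose if all its cycles have the same length and all cycles share at
least one common vertex. -/
def IsRose {V : Type*} (E : V → V → Prop) : Prop :=
  (∀ w ℓ w' ℓ', IsCycle E w ℓ → IsCycle E w' ℓ' → ℓ = ℓ') ∧
    ∃ v : V, ∀ w ℓ, IsCycle E w ℓ → ∃ i < ℓ, w i = v

/-- A digraph is a cycle digraph if it consists of a single directed cycle passing
through all its vertices, containing all its edges. -/
def IsCycleDigraph {V : Type*} [Fintype V] (E : V → V → Prop) : Prop :=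
  ∃ w ℓ, IsCycle E w ℓ ∧ ℓ = Fintype.card V ∧ (∀ v : V, ∃ i < ℓ, w i = v) ∧
    ∀ a b : V, E a b → ∃ i < ℓ, w i = a ∧ w (i + 1) = b


section AuxRose

variable {V : Type*} {E : V → V → Prop}

/-- Concatenation of walks. -/
lemma isWalk_concat {w1 w2 : ℕ → V} {ℓ1 ℓ2 : ℕ} {a b c : V}
    (h1 : IsWalk E w1 ℓ1 a b) (h2 : IsWalk E w2 ℓ2 b c) :
    ∃ w, IsWalk E w (ℓ1 + ℓ2) a c := by
  obtain ⟨h10, h1e, h1s⟩ := h1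
  obtain ⟨h20, h2e, h2s⟩ := h2
  refine ⟨fun k => if k < ℓ1 then w1 k else w2 (k - ℓ1), ?_, ?_, ?_⟩
  · by_cases h : 0 < ℓ1
    · simp [h, h10]
    · have hz : ℓ1 = 0 := by omega
      subst hz
      simpa using h20.trans (h1e.symm.trans h10)
  · have : ¬ (ℓ1 + ℓ2 < ℓ1) := by omega
    simpa [this] using h2e
  · intro i hi
    rcases lt_or_ge i ℓ1 with h | h
    · rcases lt_or_ge (i + 1) ℓ1 with h' | h'
      · simpa [h, h'] using h1s i h
      · have he : i + 1 = ℓ1 := by omega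
        have : ¬ (i + 1 < ℓ1) := by omega
        simp only [h, if_pos, this, if_neg, if_false, if_true]
        have : w2 (i + 1 - ℓ1) = w1 (i + 1) := by
          rw [he]; simp [h20, ← h1e]
        rw [this]
        exact h1s i h
    · have h1' : ¬ (i < ℓ1) := by omega
      have h2' : ¬ (i + 1 < ℓ1) := by omega
      simp only [h1', h2', if_neg, if_false]
      have : i + 1 - ℓ1 = (i - ℓ1) + 1 := by omega
      rw [this]
      exact h2s (i - ℓ1) (by omega)

/-- Removing a closed subwalk from a closed walk. -/
lemma isWalk_excise {w : ℕ → V} {ℓ : ℕ} {a : V} {i j : ℕ}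
    (h : IsWalk E w ℓ a a) (hij : i < j) (hj : j ≤ ℓ) (hw : w i = w j) :
    ∃ w', IsWalk E w' (ℓ - (j - i)) a a := by
  obtain ⟨h0, he, hs⟩ := h
  refine ⟨fun k => if k ≤ i then w k else w (k + (j - i)), ?_, ?_, ?_⟩
  · simp [h0]
  · rcases le_or_gt (ℓ - (j - i)) i with h | h
    · have : ℓ = j ∧ i = ℓ - (j - i) := by omega
      simp [this.2.symm.le, ← this.2, hw, this.1 ▸ he]
    · have : ¬ (ℓ - (j - i) ≤ i) := by omega
      have harith : ℓ - (j - i) + (j - i) = ℓ := by omega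
      simp [this, harith, he]
  · intro k hk
    rcases lt_or_ge k i with h | h
    · simpa [h.le, (by omega : k + 1 ≤ i)] using hs k (by omega)
    · rcases eq_or_lt_of_le h with h' | h'
      · subst h'
        have hni : ¬ (i + 1 ≤ i) := by omega
        simp only [le_refl, if_pos, hni, if_neg]
        have : i + 1 + (j - i) = j + 1 := by omega
        rw [this, hw]
        exact hs j (by omega)
      · have hn1 : ¬ (k ≤ i) := by omega
        have hn2 : ¬ (k + 1 ≤ i) := by omega
        simp only [hn1, hn2, if_neg]
        have : k + 1 + (j - i) = (k + (j - i)) + 1 := by omega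
        rw [this]
        exact hs (k + (j - i)) (by omega)

/-- Every positive closed walk has length divisible by `p`, if every cycle does. -/
lemma closed_walk_dvd {p : ℕ} (hdiv : ∀ w ℓ, IsCycle E w ℓ → p ∣ ℓ) :
    ∀ ℓ, ∀ w : ℕ → V, ∀ a, IsWalk E w ℓ a a → p ∣ ℓ := by
  intro ℓ
  induction ℓ using Nat.strong_induction_on with
  | _ ℓ ih =>
    intro w a hw
    rcases Nat.eq_zero_or_pos ℓ with h0 | h0
    · simp [h0]
    by_cases hinj : ∀ i j, i < ℓ → j < ℓ → w i = w j → i = j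
    · exact hdiv w ℓ ⟨h0, hw.2.1.trans hw.1.symm, hw.2.2, hinj⟩
    · push_neg at hinj
      obtain ⟨i, j, hi, hj, heq, hne⟩ := hinj
      -- wlog i < j
      rcases Nat.lt_or_ge i j with hij | hij
      case _ =>
        have hinner : IsWalk E (fun k => w (i + k)) (j - i) (w i) (w i) := by
          refine ⟨by simp, ?_, ?_⟩
          · have : i + (j - i) = j := by omega
            simp [this, heq]
          · intro k hk
            have : i + (k + 1) = (i + k) + 1 := by omega
            simpa [this] using hw.2.2 (i + k) (by omega)
        obtain ⟨w', hw'⟩ := isWalk_excise hw hij hj.le heq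
        have d1 : p ∣ (j - i) := ih (j - i) (by omega) _ _ hinner
        have d2 : p ∣ (ℓ - (j - i)) := ih (ℓ - (j - i)) (by omega) _ _ hw'
        have : ℓ = (j - i) + (ℓ - (j - i)) := by omega
        rw [this]; exact Nat.dvd_add d1 d2
      case _ =>
        have hij' : j < i := by omega
        have hinner : IsWalk E (fun k => w (j + k)) (i - j) (w j) (w j) := by
          refine ⟨by simp, ?_, ?_⟩
          · have : j + (i - j) = i := by omega
            simp [this, heq]
          · intro k hk
            have : j + (k + 1) = (j + k) + 1 := by omega
            simpa [this] using hw.2.2 (j + k) (by omega)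
        obtain ⟨w', hw'⟩ := isWalk_excise hw hij' hi.le heq.symm
        have d1 : p ∣ (i - j) := ih (i - j) (by omega) _ _ hinner
        have d2 : p ∣ (ℓ - (i - j)) := ih (ℓ - (i - j)) (by omega) _ _ hw'
        have : ℓ = (i - j) + (ℓ - (i - j)) := by omega
        rw [this]; exact Nat.dvd_add d1 d2

end AuxRose

section AuxRose2

variable {V : Type*} {E : V → V → Prop}

/-- In a strongly connected digraph containing a cycle, every vertex starts a cycle. -/
lemma exists_cycle_through (hsc : StronglyConnected E) {c0 : ℕ → V} {L0 : ℕ}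
    (hc0 : IsCycle E c0 L0) (u : V) :
    ∃ w ℓ, IsCycle E w ℓ ∧ w 0 = u := by
  classical
  obtain ⟨w1, a, hw1⟩ := hsc u (c0 0)
  obtain ⟨w2, b, hw2⟩ := hsc (c0 0) u
  have hcw : IsWalk E c0 L0 (c0 0) (c0 0) := ⟨rfl, hc0.2.1, hc0.2.2.1⟩
  obtain ⟨w3, hw3⟩ := isWalk_concat hw1 hcw
  obtain ⟨w4, hw4⟩ := isWalk_concat hw3 hw2
  have hpos : 0 < a + L0 + b := by have := hc0.1; omega
  have hex : ∃ n, 0 < n ∧ ∃ w, IsWalk E w n u u := ⟨a + L0 + b, hpos, w4, hw4⟩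
  obtain ⟨hn, w, hw⟩ := Nat.find_spec hex
  have key : ∀ i j, i < j → j < Nat.find hex → w i = w j → False := by
    intro i j hij hj heq
    obtain ⟨w', hw'⟩ := isWalk_excise hw hij hj.le heq
    exact Nat.find_min hex (m := Nat.find hex - (j - i)) (by omega)
      ⟨by omega, w', hw'⟩
  refine ⟨w, Nat.find hex, ⟨hn, hw.2.1.trans hw.1.symm, hw.2.2, ?_⟩, hw.1⟩
  intro i j hi hj heq
  rcases Nat.lt_trichotomy i j with h | h | h
  · exact absurd (key i j h hj heq) (by simp)
  · exact h
  · exact absurd (key j i h hi heq.symm) (by simp)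

/-- If `p > 0` and every common divisor of cycle lengths divides `p`, a cycle exists. -/
lemma exists_cycle_of_gcd {p : ℕ} (hp : 0 < p)
    (hgcd : ∀ q, (∀ w ℓ, IsCycle E w ℓ → q ∣ ℓ) → q ∣ p) :
    ∃ w : ℕ → V, ∃ ℓ, IsCycle E w ℓ := by
  by_contra h
  push_neg at h
  have hd : (p + 1) ∣ p := hgcd (p + 1) (fun w ℓ hc => absurd hc (by simpa using h w ℓ))
  have := Nat.le_of_dvd hp hd
  omega

end AuxRose2

/-- A strongly connected digraph with loop number `p` is a rose iff at least one of the
equivalence classes of `∼ₚ` is a singleton. -/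
theorem rose_iff_singleton_class {V : Type*} [Fintype V] (E : V → V → Prop)
    (hsc : StronglyConnected E) (p : ℕ) (hp : 0 < p)
    (hdiv : ∀ w ℓ, IsCycle E w ℓ → p ∣ ℓ)
    (hgcd : ∀ q, (∀ w ℓ, IsCycle E w ℓ → q ∣ ℓ) → q ∣ p) :
    IsRose E ↔ ∃ v : V, ∀ u : V, RelP E p u v → u = v := by
  classical
  constructor
  · rintro ⟨hlen, v0, hv0⟩
    obtain ⟨c0, L0, hc0⟩ := exists_cycle_of_gcd hp hgcd
    have hLp : L0 = p := by
      have h1 : p ∣ L0 := hdiv _ _ hc0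
      have h2 : L0 ∣ p := hgcd L0 (fun w ℓ hc => by rw [← hlen c0 L0 w ℓ hc0 hc])
      exact Nat.dvd_antisymm h2 h1
    refine ⟨v0, fun u hrel => ?_⟩
    by_contra hne
    obtain ⟨c, ℓc, hc, hc0u⟩ := exists_cycle_through hsc hc0 u
    have hℓc : ℓc = p := by rw [← hLp]; exact (hlen c0 L0 c ℓc hc0 hc).symm
    obtain ⟨i, hip, hiv⟩ := hv0 c ℓc hc
    have hi0 : i ≠ 0 := by
      intro h
      exact hne (by rw [← hc0u, ← hiv, h])
    have hwalk : IsWalk E (fun k => c (i + k)) (ℓc - i) v0 u := by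
      refine ⟨by simp [hiv], ?_, ?_⟩
      · have : i + (ℓc - i) = ℓc := by omega
        simp [this, hc.2.1, hc0u]
      · intro k hk
        have : i + (k + 1) = (i + k) + 1 := by omega
        simpa [this] using hc.2.2.1 (i + k) (by omega)
    obtain ⟨w2, b, hw2, hpb⟩ := hrel
    obtain ⟨w3, hw3⟩ := isWalk_concat hwalk hw2
    have hdall : p ∣ (ℓc - i) + b := closed_walk_dvd hdiv _ _ _ hw3
    have hd : p ∣ ℓc - i := (Nat.dvd_add_iff_left hpb).mpr hdall
    have := Nat.le_of_dvd (by omega) hd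
    omega
  · rintro ⟨v, hv⟩
    have key : ∀ w ℓ, IsCycle E w ℓ → (∃ i < ℓ, w i = v) ∧ ℓ = p := by
      intro w ℓ hc
      obtain ⟨wm, m, hwm⟩ := hsc (w 0) v
      have hpℓ : p ∣ ℓ := hdiv w ℓ hc
      have hℓp : p ≤ ℓ := Nat.le_of_dvd hc.1 hpℓ
      have reach : ∀ t, t ≤ ℓ → ∃ w', IsWalk E w' ((ℓ - t) + m) (w t) v := by
        intro t ht
        have h1 : IsWalk E (fun k => w (t + k)) (ℓ - t) (w t) (w 0) := by
          refine ⟨by simp, ?_, ?_⟩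
          · have : t + (ℓ - t) = ℓ := by omega
            simp [this, hc.2.1]
          · intro k hk
            have : t + (k + 1) = (t + k) + 1 := by omega
            simpa [this] using hc.2.2.1 (t + k) (by omega)
        exact isWalk_concat h1 hwm
      have him : m % p ≤ m := Nat.mod_le m p
      have hipp : m % p < p := Nat.mod_lt m hp
      set i := m % p with hi
      have hreach : ∀ t, t ≤ ℓ → p ∣ (ℓ - t) + m → w t = v := by
        intro t ht hdd
        obtain ⟨w', hw'⟩ := reach t ht
        exact hv (w t) ⟨w', _, hw', hdd⟩
      have hwiv : w i = v := by
        refine hreach i (by omega) ?_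
        have harith : (ℓ - i) + m = ℓ + (m - i) := by omega
        rw [harith]
        exact Nat.dvd_add hpℓ (Nat.dvd_sub_mod m)
      have hℓeq : ℓ = p := by
        by_contra hne
        have h2p : p + p ≤ ℓ := by
          have h1 : p ∣ ℓ - p := Nat.dvd_sub hpℓ dvd_rfl
          have := Nat.le_of_dvd (by omega) h1
          omega
        have hwiv' : w (i + p) = v := by
          refine hreach (i + p) (by omega) ?_
          have harith : (ℓ - (i + p)) + m = (ℓ - p) + (m - i) := by omega
          rw [harith]
          exact Nat.dvd_add (Nat.dvd_sub hpℓ dvd_rfl) (Nat.dvd_sub_mod m)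
        have := hc.2.2.2 i (i + p) (by omega) (by omega) (hwiv.trans hwiv'.symm)
        omega
      exact ⟨⟨i, by omega, hwiv⟩, hℓeq⟩
    refine ⟨fun w ℓ w' ℓ' hc hc' => by rw [(key w ℓ hc).2, (key w' ℓ' hc').2], v,
      fun w ℓ hc => (key w ℓ hc).1⟩
end

section
/- Let H = (S, A) be the stability structure of a conjunctive Boolean network with strongly connected dependency graph D and loop number p*, where S is the set of periodic orbits identified with binary necklaces of length p*. Then for periodic orbits s_i, s_j, the edge s_i → s_j exists in A if and only if one of the following holds: (1) s_i ≻ s_j and σ(s_i) − σ(s_j) = 1; (2) s_i ≺ s_j, σ(s_j) − σ(s_i) = 1, and D is a rose; (3) s_i = s_j, s_i is not the all-ones necklace, and D is not a cycle digraph. -/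
/-- The conjunctive Boolean network with in-neighbor sets `N`: coordinate `i` updates
to the AND (product over `F₂`) of the variables indexed by `N i`. -/
noncomputable def cbn {n : ℕ} (N : Fin n → Finset (Fin n)) (x : Fin n → Bool) : Fin n → Bool :=
  fun i => (N i).inf x

/-- The dependency graph of the conjunctive Boolean network: edge `j → i` iff `j ∈ N i`. -/
def depEdge {n : ℕ} (N : Fin n → Finset (Fin n)) (j i : Fin n) : Prop := j ∈ N i

/-!
Choose a level function `c : V → ZMod p` along which every edge of `D` climbs by one; it exists
because every closed walk has length divisible by `p`, and its fibers are the classes of `∼ₚ`.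
The closed-walk lengths at each vertex have gcd `p`, so beyond some bound every length congruent
to `c v - c u` is realized by a walk from `u` to `v`. Hence after any large multiple of `p` steps
each coordinate holds the conjunction of the initial state over its fiber, periodic states are
constant on fibers, and the dynamics rotates the fibers. Flipping a `1` to `0` at `i₀` therefore
zeroes the fiber of `i₀`, while flipping a `0` to `1` has an effect only if that fiber is `{i₀}`.
Some fiber is a singleton exactly when `D` is a rose, and all are exactly when `D` is a cycle
digraph.
-/

open Function

section Walks

variable {V : Type*} {E : V → V → Prop} {u v x : V} {ℓ a b p : ℕ}

def HasWalk (E : V → V → Prop) (ℓ : ℕ) (u v : V) : Prop :=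
  ∃ w, IsWalk E w ℓ u v

theorem hasWalk_zero_iff : HasWalk E 0 u v ↔ u = v := by
  constructor
  · rintro ⟨w, rfl, rfl, -⟩
    rfl
  · rintro rfl
    exact ⟨fun _ => u, rfl, rfl, fun i hi => absurd hi i.not_lt_zero⟩

theorem hasWalk_succ_iff : HasWalk E (ℓ + 1) u v ↔ ∃ k, HasWalk E ℓ u k ∧ E k v := by
  constructor
  · rintro ⟨w, h0, h1, he⟩
    exact ⟨w ℓ, ⟨w, h0, rfl, fun i hi => he i (by omega)⟩, h1 ▸ he ℓ (by omega)⟩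
  · rintro ⟨k, ⟨w, h0, rfl, he⟩, hk⟩
    refine ⟨update w (ℓ + 1) v, by rwa [update_of_ne (by omega)], update_self .., fun i hi => ?_⟩
    rw [update_of_ne (by omega)]
    rcases Nat.lt_succ_iff_lt_or_eq.mp hi with hi | rfl
    · rw [update_of_ne (by omega)]
      exact he i hi
    · rwa [update_self]

theorem HasWalk.append (h₁ : HasWalk E a u v) (h₂ : HasWalk E b v x) :
    HasWalk E (a + b) u x := by
  induction b generalizing x with
  | zero => rwa [← hasWalk_zero_iff.mp h₂]
  | succ b ih =>
    obtain ⟨k, hk, hkx⟩ := hasWalk_succ_iff.mp h₂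
    exact hasWalk_succ_iff.mpr ⟨k, ih hk, hkx⟩

theorem StronglyConnected.exists_hasWalk (hsc : StronglyConnected E) (u v : V) :
    ∃ ℓ, HasWalk E ℓ u v :=
  let ⟨w, ℓ, hw⟩ := hsc u v
  ⟨ℓ, w, hw⟩

theorem exists_hasWalk_to (hin : ∀ v, ∃ u, E u v) (ℓ : ℕ) (v : V) : ∃ u, HasWalk E ℓ u v := by
  induction ℓ generalizing v with
  | zero => exact ⟨v, hasWalk_zero_iff.mpr rfl⟩
  | succ ℓ ih =>
    obtain ⟨k, hk⟩ := hin v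
    obtain ⟨u, hu⟩ := ih k
    exact ⟨u, hasWalk_succ_iff.mpr ⟨k, hu, hk⟩⟩

theorem StronglyConnected.exists_pos_hasWalk_self (hsc : StronglyConnected E)
    (hin : ∀ v, ∃ u, E u v) (u : V) : ∃ ℓ, 0 < ℓ ∧ HasWalk E ℓ u u := by
  obtain ⟨k, hk⟩ := hin u
  obtain ⟨ℓ, hℓ⟩ := hsc.exists_hasWalk u k
  exact ⟨ℓ + 1, ℓ.succ_pos, hasWalk_succ_iff.mpr ⟨k, hℓ, hk⟩⟩

theorem IsWalk.hasWalk_segment {w : ℕ → V} (hw : IsWalk E w ℓ u v) {i j : ℕ} (hij : i ≤ j)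
    (hj : j ≤ ℓ) : HasWalk E (j - i) (w i) (w j) :=
  ⟨fun s => w (i + s), rfl, by simp only [Nat.add_sub_cancel' hij], fun s hs => by
    simpa only [← add_assoc] using hw.2.2 (i + s) (by omega)⟩

theorem IsCycle.isWalk {w : ℕ → V} (hw : IsCycle E w ℓ) : IsWalk E w ℓ (w 0) (w 0) :=
  ⟨rfl, hw.2.1, hw.2.2.1⟩

theorem IsWalk.exists_split_of_not_isCycle {w : ℕ → V} (hw : IsWalk E w ℓ u u) (hℓ : 0 < ℓ)
    (hnc : ¬IsCycle E w ℓ) :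
    ∃ a b, 0 < a ∧ 0 < b ∧ a + b = ℓ ∧ (∃ v, HasWalk E a v v) ∧ HasWalk E b u u := by
  obtain ⟨i, j, hij, hj, heq⟩ : ∃ i j, i < j ∧ j < ℓ ∧ w i = w j := by
    have hninj : ¬∀ i j, i < ℓ → j < ℓ → w i = w j → i = j :=
      fun h => hnc ⟨hℓ, hw.2.1.trans hw.1.symm, hw.2.2, h⟩
    push Not at hninj
    obtain ⟨i, j, hi, hj, heq, hne⟩ := hninj
    rcases hne.lt_or_gt with h | h
    exacts [⟨i, j, h, hj, heq⟩, ⟨j, i, h, hi, heq.symm⟩]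
  have hloop := hw.hasWalk_segment hij.le hj.le
  have hhead := hw.hasWalk_segment (Nat.zero_le i) (by omega)
  have htail := hw.hasWalk_segment hj.le le_rfl
  rw [← heq] at hloop htail
  rw [hw.1, Nat.sub_zero] at hhead
  rw [hw.2.1] at htail
  exact ⟨j - i, i + (ℓ - j), by omega, by omega, by omega, ⟨w i, hloop⟩, hhead.append htail⟩

theorem HasWalk.dvd_of_forall_isCycle (hdiv : ∀ w ℓ, IsCycle E w ℓ → p ∣ ℓ)
    (h : HasWalk E ℓ u u) : p ∣ ℓ := by
  induction ℓ using Nat.strong_induction_on generalizing u with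
  | _ ℓ ih =>
  obtain ⟨w, hw⟩ := h
  rcases Nat.eq_zero_or_pos ℓ with rfl | hℓ
  · exact dvd_zero p
  by_cases hcyc : IsCycle E w ℓ
  · exact hdiv w ℓ hcyc
  obtain ⟨a, b, ha, hb, rfl, ⟨v, hv⟩, hu⟩ := hw.exists_split_of_not_isCycle hℓ hcyc
  exact dvd_add (ih a (by omega) hv) (ih b (by omega) hu)

theorem HasWalk.exists_isCycle (h : HasWalk E ℓ u u) (hℓ : 0 < ℓ) :
    ∃ w ℓ', IsCycle E w ℓ' ∧ w 0 = u := by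
  induction ℓ using Nat.strong_induction_on with
  | _ ℓ ih =>
  obtain ⟨w, hw⟩ := h
  by_cases hcyc : IsCycle E w ℓ
  · exact ⟨w, ℓ, hcyc, hw.1⟩
  obtain ⟨a, b, ha, hb, rfl, -, hu⟩ := hw.exists_split_of_not_isCycle hℓ hcyc
  exact ih b (by omega) hu hb

end Walks

section Grading

variable {V : Type*} {E : V → V → Prop} {u v : V} {ℓ p : ℕ}

def IsCyclicGrading (E : V → V → Prop) {p : ℕ} (c : V → ZMod p) : Prop :=
  ∀ ⦃a b⦄, E a b → c b = c a + 1

theorem exists_isCyclicGrading (hsc : StronglyConnected E)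
    (hdiv : ∀ w ℓ, IsCycle E w ℓ → p ∣ ℓ) : ∃ c : V → ZMod p, IsCyclicGrading E c := by
  rcases isEmpty_or_nonempty V with _ | ⟨⟨v₀⟩⟩
  · exact ⟨isEmptyElim, fun a => isEmptyElim a⟩
  choose d hd using hsc.exists_hasWalk v₀
  refine ⟨fun u => d u, fun a b hab => ?_⟩
  obtain ⟨e, he⟩ := hsc.exists_hasWalk b v₀
  have h₁ := (((hd a).append (hasWalk_succ_iff.mpr ⟨a, hasWalk_zero_iff.mpr rfl, hab⟩)).append
    he).dvd_of_forall_isCycle hdiv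
  have h₂ := ((hd b).append he).dvd_of_forall_isCycle hdiv
  rw [← ZMod.natCast_eq_zero_iff] at h₁ h₂
  push_cast at h₁ h₂
  linear_combination h₂ - h₁

namespace IsCyclicGrading

variable {c : V → ZMod p} (hc : IsCyclicGrading E c)
include hc

theorem apply_of_hasWalk (h : HasWalk E ℓ u v) : c v = c u + ℓ := by
  induction ℓ generalizing v with
  | zero => simp [hasWalk_zero_iff.mp h]
  | succ ℓ ih =>
    obtain ⟨k, hk, hkv⟩ := hasWalk_succ_iff.mp h
    rw [hc hkv, ih hk]
    push_cast
    ring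

theorem dvd_of_hasWalk_self (h : HasWalk E ℓ u u) : p ∣ ℓ :=
  (ZMod.natCast_eq_zero_iff ℓ p).mp (by simpa using hc.apply_of_hasWalk h)

theorem dvd_of_isCycle {w : ℕ → V} (h : IsCycle E w ℓ) : p ∣ ℓ :=
  hc.dvd_of_hasWalk_self ⟨w, h.isWalk⟩

theorem apply_of_isCycle {w : ℕ → V} (h : IsCycle E w ℓ) {s : ℕ} (hs : s ≤ ℓ) :
    c (w s) = c (w 0) + s := by
  simpa using hc.apply_of_hasWalk (h.isWalk.hasWalk_segment (Nat.zero_le s) hs)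

theorem relP_iff (hsc : StronglyConnected E) : RelP E p u v ↔ c u = c v := by
  constructor
  · rintro ⟨w, ℓ, hw, hpℓ⟩
    rw [hc.apply_of_hasWalk ⟨w, hw⟩, (ZMod.natCast_eq_zero_iff ℓ p).mpr hpℓ, add_zero]
  · intro h
    obtain ⟨w, ℓ, hw⟩ := hsc u v
    refine ⟨w, ℓ, hw, (ZMod.natCast_eq_zero_iff ℓ p).mp ?_⟩
    simpa [h] using hc.apply_of_hasWalk ⟨w, hw⟩

theorem exists_add_eq [NeZero p] (hin : ∀ v, ∃ u, E u v) (v : V) (ρ : ZMod p) :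
    ∃ u, c u + ρ = c v := by
  obtain ⟨u, hu⟩ := exists_hasWalk_to hin ρ.val v
  exact ⟨u, by rw [hc.apply_of_hasWalk hu, ZMod.natCast_zmod_val]⟩

theorem surjective [NeZero p] [Nonempty V] (hin : ∀ v, ∃ u, E u v) : Surjective c := by
  intro ρ
  obtain ⟨u, hu⟩ := hc.exists_add_eq hin (Classical.arbitrary V) (c (Classical.arbitrary V) - ρ)
  exact ⟨u, by linear_combination hu⟩

end IsCyclicGrading

end Grading

section Period

variable {V : Type*} {E : V → V → Prop} {p : ℕ} {c : V → ZMod p}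

def closedWalkLengths (E : V → V → Prop) (u : V) : AddSubmonoid ℕ where
  carrier := {ℓ | HasWalk E ℓ u u}
  zero_mem' := hasWalk_zero_iff.mpr rfl
  add_mem' := HasWalk.append

theorem IsCyclicGrading.setGcd_closedWalkLengths (hc : IsCyclicGrading E c)
    (hsc : StronglyConnected E) (hgcd : ∀ q, (∀ w ℓ, IsCycle E w ℓ → q ∣ ℓ) → q ∣ p) (u : V) :
    Nat.setGcd (closedWalkLengths E u) = p := by
  refine Nat.dvd_antisymm (hgcd _ fun w ℓ hcyc => ?_)
    (Nat.dvd_setGcd_iff.mpr fun ℓ hℓ => hc.dvd_of_hasWalk_self hℓ)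
  obtain ⟨a, ha⟩ := hsc.exists_hasWalk u (w 0)
  obtain ⟨b, hb⟩ := hsc.exists_hasWalk (w 0) u
  have h₁ := Nat.setGcd_dvd_of_mem (s := closedWalkLengths E u) (ha.append hb)
  have h₂ := Nat.setGcd_dvd_of_mem (s := closedWalkLengths E u)
    ((ha.append ⟨w, hcyc.isWalk⟩).append hb)
  rw [add_right_comm] at h₂
  exact (Nat.dvd_add_right h₁).mp h₂

theorem IsCyclicGrading.exists_hasWalk_of_le [Fintype V] (hc : IsCyclicGrading E c)
    (hsc : StronglyConnected E) (hgcd : ∀ q, (∀ w ℓ, IsCycle E w ℓ → q ∣ ℓ) → q ∣ p) :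
    ∃ T : ℕ, ∀ t ≥ T, ∀ u v, c u + t = c v → HasWalk E t u v := by
  have hclosed : ∀ u, ∃ K, ∀ t ≥ K, p ∣ t → HasWalk E t u u := fun u => by
    obtain ⟨K, hK⟩ := Nat.exists_mem_closure_of_ge (closedWalkLengths E u : Set ℕ)
    rw [AddSubmonoid.closure_eq, hc.setGcd_closedWalkLengths hsc hgcd] at hK
    exact ⟨K, hK⟩
  choose K hK using hclosed
  choose d hd using hsc.exists_hasWalk
  refine ⟨Finset.univ.sup fun q : V × V => K q.1 + d q.1 q.2, fun t ht u v huv => ?_⟩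
  have hle : K u + d u v ≤ t :=
    (Finset.le_sup (f := fun q : V × V => K q.1 + d q.1 q.2) (Finset.mem_univ (u, v))).trans ht
  have hdvd : p ∣ t - d u v := by
    rw [← ZMod.natCast_eq_zero_iff, Nat.cast_sub (by omega)]
    linear_combination huv + hc.apply_of_hasWalk (hd u v)
  simpa [Nat.sub_add_cancel (show d u v ≤ t by omega)] using
    (hK u (t - d u v) (by omega) hdvd).append (hd u v)

theorem IsRose.exists_fiber_eq_singleton (hrose : IsRose E) (hc : IsCyclicGrading E c)
    (hsc : StronglyConnected E) (hin : ∀ v, ∃ u, E u v)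
    (hgcd : ∀ q, (∀ w ℓ, IsCycle E w ℓ → q ∣ ℓ) → q ∣ p) :
    ∃ v, ∀ u, c u = c v → u = v := by
  obtain ⟨hlen, v, hv⟩ := hrose
  refine ⟨v, fun u huv => by_contra fun hvu => ?_⟩
  obtain ⟨ℓ, hℓ, hu⟩ := hsc.exists_pos_hasWalk_self hin u
  obtain ⟨w, ℓ', hcyc, rfl⟩ := hu.exists_isCycle hℓ
  obtain ⟨t, ht, rfl⟩ := hv w ℓ' hcyc
  have hℓ'p : ℓ' = p := Nat.dvd_antisymm
    (hgcd ℓ' fun w' ℓ'' h' => hlen w' ℓ'' w ℓ' h' hcyc ▸ dvd_rfl) (hc.dvd_of_isCycle hcyc)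
  have ht0 : t ≠ 0 := by
    rintro rfl
    exact hvu rfl
  have hpt : p ∣ t :=
    (ZMod.natCast_eq_zero_iff t p).mp (by simpa [huv] using hc.apply_of_isCycle hcyc ht.le)
  exact absurd (Nat.le_of_dvd (Nat.pos_of_ne_zero ht0) hpt) (by omega)

theorem IsCyclicGrading.isRose_of_fiber_eq_singleton [NeZero p] (hc : IsCyclicGrading E c)
    {v : V} (hv : ∀ u, c u = c v → u = v) : IsRose E := by
  -- Along a cycle the level climbs by one per step, so the cycle meets the fiber of `v`
  -- every `p` steps; that fiber being `{v}`, the cycle visits `v` exactly once.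
  have key : ∀ w ℓ, IsCycle E w ℓ → ℓ = p ∧ ∃ i < ℓ, w i = v := by
    intro w ℓ hcyc
    have hpℓ := hc.dvd_of_isCycle hcyc
    have hp_le : p ≤ ℓ := Nat.le_of_dvd hcyc.1 hpℓ
    set s := (c v - c (w 0)).val
    have hs : s < p := ZMod.val_lt _
    have hws : ∀ q, s + q ≤ ℓ → p ∣ q → w (s + q) = v := fun q hq hpq => by
      refine hv _ ?_
      rw [hc.apply_of_isCycle hcyc hq, Nat.cast_add, (ZMod.natCast_eq_zero_iff q p).mpr hpq,
        ZMod.natCast_zmod_val]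
      ring
    refine ⟨by_contra fun hℓp => ?_, s, by omega, hws 0 (by omega) (dvd_zero p)⟩
    obtain ⟨m, rfl⟩ := hpℓ
    have hm : 2 ≤ m := by
      rcases m with _ | _ | m
      · exact absurd hcyc.1 (by simp)
      · exact absurd (mul_one p) hℓp
      · omega
    have h2p : p * 2 ≤ p * m := Nat.mul_le_mul_left p hm
    have := hcyc.2.2.2 s (s + p) (by omega) (by omega)
      ((hws 0 (by omega) (dvd_zero p)).trans (hws p (by omega) dvd_rfl).symm)
    have := NeZero.pos p
    omega
  exact ⟨fun w ℓ w' ℓ' h h' => (key w ℓ h).1.trans (key w' ℓ' h').1.symm, v,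
    fun w ℓ h => (key w ℓ h).2⟩

theorem IsCyclicGrading.isRose_iff [NeZero p] (hc : IsCyclicGrading E c)
    (hsc : StronglyConnected E) (hin : ∀ v, ∃ u, E u v)
    (hgcd : ∀ q, (∀ w ℓ, IsCycle E w ℓ → q ∣ ℓ) → q ∣ p) :
    IsRose E ↔ ∃ v, ∀ u, c u = c v → u = v :=
  ⟨fun h => h.exists_fiber_eq_singleton hc hsc hin hgcd,
    fun ⟨_, hv⟩ => hc.isRose_of_fiber_eq_singleton hv⟩

theorem isCyclicGrading_of_isCycle {w : ℕ → V} {ℓ : ℕ} (hcyc : IsCycle E w ℓ)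
    (hcover : ∀ v, ∃ i < ℓ, w i = v) (hedge : ∀ a b, E a b → ∃ i < ℓ, w i = a ∧ w (i + 1) = b) :
    ∃ φ : V → ZMod ℓ, IsCyclicGrading E φ := by
  choose idx hidx hwidx using hcover
  have hidx_eq : ∀ j < ℓ, idx (w j) = j := fun j hj => hcyc.2.2.2 _ _ (hidx _) hj (hwidx _)
  refine ⟨fun v => idx v, fun a b hab => ?_⟩
  obtain ⟨i, hi, rfl, rfl⟩ := hedge a b hab
  show (idx (w (i + 1)) : ZMod ℓ) = idx (w i) + 1
  rw [hidx_eq i hi]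
  rcases (show i + 1 ≤ ℓ from hi).lt_or_eq with h | h
  · rw [hidx_eq (i + 1) h, Nat.cast_succ]
  · rw [h, hcyc.2.1, hidx_eq 0 hcyc.1, Nat.cast_zero, ← Nat.cast_add_one, h, ZMod.natCast_self]

theorem IsCycleDigraph.nonempty [Fintype V] (h : IsCycleDigraph E) : Nonempty V :=
  let ⟨w, _⟩ := h
  ⟨w 0⟩

theorem IsCycleDigraph.injective [Fintype V] [NeZero p] (h : IsCycleDigraph E)
    (hc : IsCyclicGrading E c) (hin : ∀ v, ∃ u, E u v)
    (hgcd : ∀ q, (∀ w ℓ, IsCycle E w ℓ → q ∣ ℓ) → q ∣ p) : Injective c := by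
  have := h.nonempty
  obtain ⟨w, ℓ, hcyc, hcard, hcover, hedge⟩ := h
  obtain ⟨φ, hφ⟩ := isCyclicGrading_of_isCycle hcyc hcover hedge
  have hℓp : ℓ = p := Nat.dvd_antisymm (hgcd ℓ fun _ _ h => hφ.dvd_of_isCycle h)
    (hc.dvd_of_isCycle hcyc)
  exact ((Fintype.bijective_iff_surjective_and_card c).mpr
    ⟨hc.surjective hin, by rw [ZMod.card, ← hℓp, hcard]⟩).injective

theorem IsCyclicGrading.isCycleDigraph_of_injective [Fintype V] [NeZero p] [Nonempty V]
    (hc : IsCyclicGrading E c) (hin : ∀ v, ∃ u, E u v) (hinj : Injective c) :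
    IsCycleDigraph E := by
  have hbij : Bijective c := ⟨hinj, hc.surjective hin⟩
  obtain ⟨v₀⟩ := ‹Nonempty V›
  -- the cycle runs through the vertices in order of level
  let w : ℕ → V := fun s => (Equiv.ofBijective c hbij).symm (c v₀ + s)
  have hw : ∀ s v, w s = v ↔ c v = c v₀ + s := fun s v => by
    rw [Equiv.symm_apply_eq, Equiv.ofBijective_apply, eq_comm]
  have hwc : ∀ v, w (c v - c v₀).val = v := fun v =>
    (hw _ _).mpr (by rw [ZMod.natCast_zmod_val]; ring)
  have hwedge : ∀ s, E (w s) (w (s + 1)) := fun s => by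
    obtain ⟨j, hj⟩ := hin (w (s + 1))
    have hjs : w s = j := (hw s j).mpr (by
      have h := (hw (s + 1) _).mp rfl
      push_cast at h
      linear_combination h - hc hj)
    rwa [hjs]
  refine ⟨w, p, ⟨NeZero.pos p, ?_, fun i _ => hwedge i, fun i j hi hj hij => ?_⟩,
    ((Fintype.card_of_bijective hbij).trans (ZMod.card p)).symm,
    fun v => ⟨_, ZMod.val_lt _, hwc v⟩, fun a b hab => ⟨_, ZMod.val_lt _, hwc a, ?_⟩⟩
  · simp [w]
  · have hij' : (i : ZMod p) = j :=
      add_left_cancel (((hw i _).mp hij).symm.trans ((hw j _).mp rfl))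
    rw [← ZMod.val_cast_of_lt hi, ← ZMod.val_cast_of_lt hj, hij']
  · refine (hw _ b).mpr ?_
    rw [hc hab]
    push_cast
    rw [ZMod.natCast_zmod_val]
    ring

theorem IsCyclicGrading.isCycleDigraph_iff [Fintype V] [NeZero p] (hc : IsCyclicGrading E c)
    (hin : ∀ v, ∃ u, E u v) (hgcd : ∀ q, (∀ w ℓ, IsCycle E w ℓ → q ∣ ℓ) → q ∣ p) :
    IsCycleDigraph E ↔ Nonempty V ∧ Injective c :=
  ⟨fun h => ⟨h.nonempty, h.injective hc hin hgcd⟩,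
    fun ⟨_, hinj⟩ => hc.isCycleDigraph_of_injective hin hinj⟩

end Period

section Fibers

variable {V : Type*} {p : ℕ} {c : V → ZMod p} {z u v : V → Bool} {i₀ : V} {a b : Bool}

theorem forall_update_eq_true_iff [DecidableEq V] (hz : z.FactorsThrough c) {i : V}
    (hi : c i ≠ c i₀) (b : Bool) : (∀ j, c j = c i → update z i₀ b j = true) ↔ z i = true := by
  refine ⟨fun h => ?_, fun h j hj => ?_⟩
  · simpa [update_of_ne (show i ≠ i₀ by rintro rfl; exact hi rfl)] using h i rfl
  · rw [update_of_ne (by rintro rfl; exact hi hj.symm), hz hj, h]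

def DiffersOnFiber (c : V → ZMod p) (i₀ : V) (a b : Bool) (u v : V → Bool) : Prop :=
  (∀ j, c j = c i₀ → u j = a ∧ v j = b) ∧ ∀ j, ¬c j = c i₀ → v j = u j

theorem DiffersOnFiber.eq_ite (h : DiffersOnFiber c i₀ a b u v) :
    v = fun j => if c j = c i₀ then b else u j := by
  funext j
  split_ifs with hj
  exacts [(h.1 j hj).2, h.2 j hj]

theorem differsOnFiber_ite (h : ∀ j, c j = c i₀ → u j = a) :
    DiffersOnFiber c i₀ a b u fun j => if c j = c i₀ then b else u j :=
  ⟨fun j hj => ⟨h j hj, if_pos hj⟩, fun _ hj => if_neg hj⟩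

end Fibers

section Network

variable {n p : ℕ} {N : Fin n → Finset (Fin n)} {c : Fin n → ZMod p} {T τ : ℕ}
  {z : Fin n → Bool}

theorem iterate_cbn_apply_eq_true_iff (t : ℕ) (z : Fin n → Bool) (i : Fin n) :
    (cbn N)^[t] z i = true ↔ ∀ j, HasWalk (depEdge N) t j i → z j = true := by
  induction t generalizing i with
  | zero => simp [hasWalk_zero_iff]
  | succ t ih =>
    rw [iterate_succ_apply']
    change (N i).inf ((cbn N)^[t] z) = ⊤ ↔ _
    simp only [Finset.inf_eq_top_iff, hasWalk_succ_iff]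
    exact ⟨fun h j ⟨k, hjk, hk⟩ => (ih k).mp (h k hk) j hjk,
      fun h k hk => (ih k).mpr fun j hjk => h j ⟨k, hjk, hk⟩⟩

theorem iterate_cbn_apply_of_factorsThrough (hne : ∀ i, (N i).Nonempty)
    (hc : IsCyclicGrading (depEdge N) c) (hz : z.FactorsThrough c) {t : ℕ} {i j : Fin n}
    (h : c j + t = c i) : (cbn N)^[t] z i = z j := by
  have hwalk : ∀ j', HasWalk (depEdge N) t j' i → z j' = z j := fun j' hj' =>
    hz (add_right_cancel ((hc.apply_of_hasWalk hj').symm.trans h.symm))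
  obtain ⟨j', hj'⟩ := exists_hasWalk_to hne t i
  rw [Bool.eq_iff_iff, iterate_cbn_apply_eq_true_iff]
  exact ⟨fun H => hwalk j' hj' ▸ H j' hj', fun H j' hj' => (hwalk j' hj').trans H⟩

theorem factorsThrough_iterate_cbn (hne : ∀ i, (N i).Nonempty)
    (hc : IsCyclicGrading (depEdge N) c) (hz : z.FactorsThrough c) (t : ℕ) :
    ((cbn N)^[t] z).FactorsThrough c := by
  intro a b hab
  obtain ⟨j, hj⟩ := exists_hasWalk_to hne t a
  have hja := (hc.apply_of_hasWalk hj).symm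
  rw [iterate_cbn_apply_of_factorsThrough hne hc hz hja,
    iterate_cbn_apply_of_factorsThrough hne hc hz (hja.trans hab)]

def IsTransientBound (N : Fin n → Finset (Fin n)) (c : Fin n → ZMod p) (T : ℕ) : Prop :=
  ∀ t ≥ T, p ∣ t → ∀ z i, (cbn N)^[t] z i = true ↔ ∀ j, c j = c i → z j = true

theorem IsCyclicGrading.exists_isTransientBound (hc : IsCyclicGrading (depEdge N) c)
    (hsc : StronglyConnected (depEdge N))
    (hgcd : ∀ q, (∀ w ℓ, IsCycle (depEdge N) w ℓ → q ∣ ℓ) → q ∣ p) :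
    ∃ T, IsTransientBound N c T := by
  obtain ⟨T, hT⟩ := hc.exists_hasWalk_of_le hsc hgcd
  refine ⟨T, fun t ht hpt z i => ?_⟩
  have ht0 : (t : ZMod p) = 0 := (ZMod.natCast_eq_zero_iff t p).mpr hpt
  rw [iterate_cbn_apply_eq_true_iff]
  refine forall_congr' fun j => imp_congr_left ⟨fun h => ?_, fun h => hT t ht j i ?_⟩
  · simpa [ht0] using (hc.apply_of_hasWalk h).symm
  · rw [ht0, add_zero, h]

theorem IsTransientBound.factorsThrough [NeZero p] (hT : IsTransientBound N c T) {M : ℕ}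
    (hM : 0 < M) (hz : IsPeriodicPt (cbn N) M z) : z.FactorsThrough c := by
  have hτ : T ≤ M * (T * p) :=
    (Nat.le_mul_of_pos_right T (NeZero.pos p)).trans (Nat.le_mul_of_pos_left _ hM)
  have hfib : ∀ i, z i = true ↔ ∀ j, c j = c i → z j = true := fun i => by
    conv_lhs => rw [← (hz.mul_const (T * p)).eq]
    exact hT _ hτ (dvd_mul_of_dvd_right (dvd_mul_left p T) M) z i
  intro a b hab
  rw [Bool.eq_iff_iff, hfib a, hfib b, hab]

theorem IsTransientBound.iterate_update_false (hT : IsTransientBound N c T) (hτ : T ≤ τ)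
    (hpτ : p ∣ τ) (hz : z.FactorsThrough c) (i₀ : Fin n) :
    (cbn N)^[τ] (update z i₀ false) = fun i => if c i = c i₀ then false else z i := by
  funext i
  rw [Bool.eq_iff_iff, hT τ hτ hpτ]
  split_ifs with hi
  · simpa using ⟨i₀, hi.symm, by simp⟩
  · exact forall_update_eq_true_iff hz hi false

theorem IsTransientBound.iterate_update_true_of_fiber_eq_singleton
    (hT : IsTransientBound N c T) (hτ : T ≤ τ) (hpτ : p ∣ τ) (hz : z.FactorsThrough c)
    {i₀ : Fin n} (hsing : ∀ u, c u = c i₀ → u = i₀) :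
    (cbn N)^[τ] (update z i₀ true) = fun i => if c i = c i₀ then true else z i := by
  funext i
  rw [Bool.eq_iff_iff, hT τ hτ hpτ]
  split_ifs with hi
  · simpa using fun j hj => by rw [hsing j (hj.trans hi), update_self]
  · exact forall_update_eq_true_iff hz hi true

theorem IsTransientBound.iterate_update_true_of_ne (hT : IsTransientBound N c T) (hτ : T ≤ τ)
    (hpτ : p ∣ τ) (hz : z.FactorsThrough c) {i₀ u : Fin n} (hi₀ : z i₀ = false) (hu : u ≠ i₀)
    (hcu : c u = c i₀) : (cbn N)^[τ] (update z i₀ true) = z := by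
  funext i
  rw [Bool.eq_iff_iff, hT τ hτ hpτ]
  by_cases hi : c i = c i₀
  · rw [hz hi, hi₀]
    simpa using ⟨u, hcu.trans hi.symm, by rw [update_of_ne hu, hz hcu, hi₀]⟩
  · exact forall_update_eq_true_iff hz hi true

end Network

section Perturbation

variable {n p : ℕ} {N : Fin n → Finset (Fin n)} {c : Fin n → ZMod p} {T M : ℕ}
  {x y u v : Fin n → Bool} {i₀ : Fin n} {a b : Bool}

theorem DiffersOnFiber.iterate_cbn (hne : ∀ i, (N i).Nonempty)
    (hc : IsCyclicGrading (depEdge N) c) (hu : u.FactorsThrough c) (hv : v.FactorsThrough c)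
    (h : DiffersOnFiber c i₀ a b u v) {t : ℕ} {i₁ : Fin n} (hi₁ : c i₀ + t = c i₁) :
    DiffersOnFiber c i₁ a b ((cbn N)^[t] u) ((cbn N)^[t] v) := by
  have hshift : ∀ j, ∃ j', c j' + t = c j ∧ (c j = c i₁ ↔ c j' = c i₀) := fun j => by
    obtain ⟨j', hj'⟩ := exists_hasWalk_to hne t j
    have hj := (hc.apply_of_hasWalk hj').symm
    exact ⟨j', hj, by rw [← hj, ← hi₁, add_left_inj]⟩
  constructor
  · intro j hj
    obtain ⟨j', hj', hiff⟩ := hshift j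
    rw [iterate_cbn_apply_of_factorsThrough hne hc hu hj',
      iterate_cbn_apply_of_factorsThrough hne hc hv hj']
    exact h.1 j' (hiff.mp hj)
  · intro j hj
    obtain ⟨j', hj', hiff⟩ := hshift j
    rw [iterate_cbn_apply_of_factorsThrough hne hc hu hj',
      iterate_cbn_apply_of_factorsThrough hne hc hv hj']
    exact h.2 j' (mt hiff.mpr hj)

theorem DiffersOnFiber.exists_iterate_cbn [NeZero p] (hne : ∀ i, (N i).Nonempty)
    (hc : IsCyclicGrading (depEdge N) c) (hu : u.FactorsThrough c) (hv : v.FactorsThrough c)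
    (h : DiffersOnFiber c i₀ a b u v) (t : ℕ) :
    ∃ i₁, DiffersOnFiber c i₁ a b ((cbn N)^[t] u) ((cbn N)^[t] v) := by
  obtain ⟨i₁, hi₁⟩ := hc.exists_add_eq hne i₀ (-t)
  exact ⟨i₁, h.iterate_cbn hne hc hu hv (by linear_combination -hi₁)⟩

def IsSuccessor (N : Fin n → Finset (Fin n)) (x y : Fin n → Bool) : Prop :=
  ∃ k i₀ τ m, (cbn N)^[τ] (update ((cbn N)^[k] x) i₀ (!(cbn N)^[k] x i₀)) = (cbn N)^[m] y

theorem exists_perturbation_iff_isSuccessor :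
    (∃ x₀ : Fin n → Bool, (∃ k, (cbn N)^[k] x = x₀) ∧
        ∃ (x' : Fin n → Bool) (i0 : Fin n),
          (x' i0 = !(x₀ i0) ∧ ∀ j, j ≠ i0 → x' j = x₀ j) ∧
          ∃ T m, (cbn N)^[T] x' = (cbn N)^[m] y) ↔ IsSuccessor N x y := by
  constructor
  · rintro ⟨_, ⟨k, rfl⟩, x', i₀, hx', τ, m, h⟩
    obtain rfl := eq_update_iff.mpr hx'
    exact ⟨k, i₀, τ, m, h⟩
  · rintro ⟨k, i₀, τ, m, h⟩
    exact ⟨_, ⟨k, rfl⟩, _, i₀, eq_update_iff.mp rfl, τ, m, h⟩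

theorem Function.IsPeriodicPt.exists_iterate_iterate_eq {α : Type*} {f : α → α} {a : α}
    (ha : IsPeriodicPt f M a) (hM : 0 < M) (k : ℕ) : ∃ e, f^[e] (f^[k] a) = a :=
  ⟨M * k - k, by
    rw [← iterate_add_apply, Nat.sub_add_cancel (Nat.le_mul_of_pos_left k hM)]
    exact (ha.mul_const k).eq⟩

theorem exists_eq_false_of_iterate_cbn {k : ℕ} {i : Fin n} (h : (cbn N)^[k] x i = false) :
    ∃ j, x j = false := by
  by_contra! hx
  have := (iterate_cbn_apply_eq_true_iff (N := N) k x i).mpr fun j _ => by simpa using hx j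
  simp [h] at this

theorem IsSuccessor.trichotomy [NeZero p] (hne : ∀ i, (N i).Nonempty)
    (hc : IsCyclicGrading (depEdge N) c) (hT : IsTransientBound N c T) (hxc : x.FactorsThrough c)
    (hy : IsPeriodicPt (cbn N) M y) (hM : 0 < M) (h : IsSuccessor N x y) :
    (∃ k i₁, DiffersOnFiber c i₁ true false ((cbn N)^[k] x) y) ∨
    ((∃ v, ∀ u, c u = c v → u = v) ∧ ∃ k i₁, DiffersOnFiber c i₁ false true ((cbn N)^[k] x) y) ∨
    ((∃ k, (cbn N)^[k] x = y) ∧ (∃ j, x j = false) ∧ ¬(Nonempty (Fin n) ∧ Injective c)) := by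
  obtain ⟨k, i₀, T₀, m, h⟩ := h
  set x₀ := (cbn N)^[k] x
  have hx₀ : x₀.FactorsThrough c := factorsThrough_iterate_cbn hne hc hxc k
  obtain ⟨τ, hτ, hpτ⟩ : ∃ τ, T + T₀ ≤ τ ∧ p ∣ τ :=
    ⟨(T + T₀) * p, Nat.le_mul_of_pos_right _ (NeZero.pos p), dvd_mul_left _ _⟩
  set m' := τ - T₀ + m
  have hz : (cbn N)^[τ] (update x₀ i₀ (!x₀ i₀)) = (cbn N)^[m'] y := by
    rw [iterate_add_apply, ← h, ← iterate_add_apply, Nat.sub_add_cancel (by omega)]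
  obtain ⟨e, he⟩ := hy.exists_iterate_iterate_eq hM m'
  have hshift : ∀ {a b i₀}, DiffersOnFiber c i₀ a b x₀ ((cbn N)^[m'] y) →
      ∃ i₁, DiffersOnFiber c i₁ a b ((cbn N)^[e + k] x) y := fun hd => by
    rw [iterate_add_apply, ← he]
    exact hd.exists_iterate_cbn hne hc hx₀
      (factorsThrough_iterate_cbn hne hc (hT.factorsThrough hM hy) m') e
  cases hi₀ : x₀ i₀
  · rw [hi₀, Bool.not_false] at hz
    by_cases hsing : ∀ u, c u = c i₀ → u = i₀
    · rw [hT.iterate_update_true_of_fiber_eq_singleton (by omega) hpτ hx₀ hsing] at hz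
      exact Or.inr (Or.inl ⟨⟨i₀, hsing⟩, e + k,
        hshift (by rw [← hz]; exact differsOnFiber_ite fun j hj => (hx₀ hj).trans hi₀)⟩)
    · push Not at hsing
      obtain ⟨u, hcu, hu⟩ := hsing
      rw [hT.iterate_update_true_of_ne (by omega) hpτ hx₀ hi₀ hu hcu] at hz
      exact Or.inr (Or.inr ⟨⟨e + k, by rw [iterate_add_apply, ← he, ← hz]⟩,
        exists_eq_false_of_iterate_cbn hi₀, fun ⟨_, hinj⟩ => hu (hinj hcu)⟩)
  · rw [hi₀, Bool.not_true, hT.iterate_update_false (by omega) hpτ hx₀] at hz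
    exact Or.inl ⟨e + k,
      hshift (by rw [← hz]; exact differsOnFiber_ite fun j hj => (hx₀ hj).trans hi₀)⟩

theorem isSuccessor_of_differsOnFiber_true_false [NeZero p] (hne : ∀ i, (N i).Nonempty)
    (hc : IsCyclicGrading (depEdge N) c) (hT : IsTransientBound N c T) (hxc : x.FactorsThrough c)
    {k : ℕ} (h : DiffersOnFiber c i₀ true false ((cbn N)^[k] x) y) : IsSuccessor N x y := by
  refine ⟨k, i₀, T * p, 0, ?_⟩
  rw [(h.1 i₀ rfl).1, Bool.not_true, hT.iterate_update_false
    (Nat.le_mul_of_pos_right T (NeZero.pos p)) (dvd_mul_left p T)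
    (factorsThrough_iterate_cbn hne hc hxc k), h.eq_ite, iterate_zero_apply]

theorem isSuccessor_of_differsOnFiber_false_true [NeZero p] (hne : ∀ i, (N i).Nonempty)
    (hc : IsCyclicGrading (depEdge N) c) (hT : IsTransientBound N c T) (hxc : x.FactorsThrough c)
    (hyc : y.FactorsThrough c) {w : Fin n} (hw : ∀ u, c u = c w → u = w) {k : ℕ}
    (h : DiffersOnFiber c i₀ false true ((cbn N)^[k] x) y) : IsSuccessor N x y := by
  set t := (c w - c i₀).val
  have h' := h.iterate_cbn hne hc (factorsThrough_iterate_cbn hne hc hxc k) hyc (t := t) (i₁ := w)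
    (by rw [ZMod.natCast_zmod_val]; ring)
  rw [← iterate_add_apply] at h'
  refine ⟨t + k, w, T * p, t, ?_⟩
  rw [(h'.1 w rfl).1, Bool.not_false, hT.iterate_update_true_of_fiber_eq_singleton
    (Nat.le_mul_of_pos_right T (NeZero.pos p)) (dvd_mul_left p T)
    (factorsThrough_iterate_cbn hne hc hxc _) hw, h'.eq_ite]

theorem isSuccessor_iterate_self [NeZero p] (hne : ∀ i, (N i).Nonempty)
    (hc : IsCyclicGrading (depEdge N) c) (hT : IsTransientBound N c T)
    (hx : IsPeriodicPt (cbn N) M x) (hM : 0 < M) {j : Fin n} (hj : x j = false)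
    (hnc : ¬Injective c) (k : ℕ) : IsSuccessor N x ((cbn N)^[k] x) := by
  obtain ⟨u, u', hcu, hu⟩ : ∃ u u', c u' = c u ∧ u' ≠ u := by
    simp only [Injective, not_forall] at hnc
    obtain ⟨a, b, hab, hab_ne⟩ := hnc
    exact ⟨b, a, hab, hab_ne⟩
  set t := (c u - c j).val
  have hxc := hT.factorsThrough hM hx
  have hu₀ : (cbn N)^[t] x u = false := by
    rw [iterate_cbn_apply_of_factorsThrough hne hc hxc (j := j)
      (by rw [ZMod.natCast_zmod_val]; ring), hj]
  obtain ⟨e, he⟩ := hx.exists_iterate_iterate_eq hM k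
  refine ⟨t, u, T * p, t + e, ?_⟩
  rw [hu₀, Bool.not_false, hT.iterate_update_true_of_ne (Nat.le_mul_of_pos_right T (NeZero.pos p))
    (dvd_mul_left p T) (factorsThrough_iterate_cbn hne hc hxc t) hu₀ hu hcu, iterate_add_apply, he]

end Perturbation

/-- The stability structure: for periodic states `x, y` representing periodic orbits
`s_i, s_j`, the orbit `s_j` is a successor of `s_i` (some single-entry perturbation of
some state of `s_i` yields a trajectory entering `s_j`) iff one of:
(1) down-edge: `s_j` is obtained from (a rotation of) `s_i` by changing the value of
exactly one component from `1` to `0`;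
(2) up-edge: `s_j` is obtained from (a rotation of) `s_i` by changing exactly one
component value from `0` to `1`, and the dependency graph is a rose;
(3) self-loop: `s_j = s_i`, `s_i` is not the all-ones necklace, and the dependency
graph is not a cycle digraph. -/
theorem stability_structure {n : ℕ} (N : Fin n → Finset (Fin n))
    (hne : ∀ i, (N i).Nonempty) (hsc : StronglyConnected (depEdge N))
    (p : ℕ) (hp : 0 < p)
    (hdiv : ∀ w ℓ, IsCycle (depEdge N) w ℓ → p ∣ ℓ)
    (hgcd : ∀ q, (∀ w ℓ, IsCycle (depEdge N) w ℓ → q ∣ ℓ) → q ∣ p)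
    (x y : Fin n → Bool)
    (hx : ∃ m, 0 < m ∧ (cbn N)^[m] x = x)
    (hy : ∃ m, 0 < m ∧ (cbn N)^[m] y = y) :
    (∃ x₀ : Fin n → Bool, (∃ k, (cbn N)^[k] x = x₀) ∧
        ∃ (x' : Fin n → Bool) (i0 : Fin n),
          (x' i0 = !(x₀ i0) ∧ ∀ j, j ≠ i0 → x' j = x₀ j) ∧
          ∃ T m, (cbn N)^[T] x' = (cbn N)^[m] y) ↔
      ((∃ (k : ℕ) (i0 : Fin n),
          (∀ j, RelP (depEdge N) p j i0 → (cbn N)^[k] x j = true ∧ y j = false) ∧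
          (∀ j, ¬ RelP (depEdge N) p j i0 → y j = (cbn N)^[k] x j)) ∨
       (IsRose (depEdge N) ∧
         ∃ (k : ℕ) (i0 : Fin n),
           (∀ j, RelP (depEdge N) p j i0 → (cbn N)^[k] x j = false ∧ y j = true) ∧
           (∀ j, ¬ RelP (depEdge N) p j i0 → y j = (cbn N)^[k] x j)) ∨
       ((∃ k, (cbn N)^[k] x = y) ∧ (∃ j, x j = false) ∧
         ¬ IsCycleDigraph (depEdge N))) := by
  have : NeZero p := ⟨hp.ne'⟩
  obtain ⟨c, hc⟩ := exists_isCyclicGrading hsc hdiv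
  obtain ⟨T, hT⟩ := hc.exists_isTransientBound hsc hgcd
  obtain ⟨mx, hmx, hx⟩ := hx
  obtain ⟨my, hmy, hy⟩ := hy
  have hxc := hT.factorsThrough hmx hx
  rw [exists_perturbation_iff_isSuccessor]
  simp only [hc.relP_iff hsc, hc.isRose_iff hsc hne hgcd, hc.isCycleDigraph_iff hne hgcd]
  refine ⟨fun h => h.trichotomy hne hc hT hxc hy hmy, ?_⟩
  rintro (⟨k, i₀, h⟩ | ⟨⟨w, hw⟩, k, i₀, h⟩ | ⟨⟨k, rfl⟩, ⟨j, hj⟩, hnc⟩)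
  · exact isSuccessor_of_differsOnFiber_true_false hne hc hT hxc h
  · exact isSuccessor_of_differsOnFiber_false_true hne hc hT hxc (hT.factorsThrough hmy hy) hw h
  · exact isSuccessor_iterate_self hne hc hT hx hmx hj (fun hinj => hnc ⟨⟨j⟩, hinj⟩) k
end
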